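/- Let n ≥ 1 and let U be a nonempty upset of a De Morgan lattice L. Then fgₙ(Comp U) is the complete n-filter generated by U: it is a complete n-filter containing U, and it is contained in every complete n-filter on L that contains U. -/

import Mathlib

/-- A De Morgan lattice: a distributive lattice with an antitone involution. -/
class DeMorgan (L : Type*) extends DistribLattice L where
  dneg : L → L
  dneg_dneg : ∀ x : L, dneg (dneg x) = x
  dneg_sup : ∀ x y : L, dneg (x ⊔ y) = dneg x ⊓ dneg y

prefix:max "∼" => DeMorgan.dneg

section Defs

variable {α : Type*}

/-- An upward closed subset of a lattice. -/
def IsUpset [Lattice α] (F : Set α) : Prop :=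
  ∀ ⦃x y : α⦄, x ∈ F → x ≤ y → y ∈ F

/-- A lattice filter: an upset closed under binary meets. -/
def IsLatFilter [Lattice α] (F : Set α) : Prop :=
  IsUpset F ∧ ∀ x y : α, x ∈ F → y ∈ F → x ⊓ y ∈ F

/-- An `n`-filter: an upset such that for every nonempty finite `Y`, if the meet of
every nonempty subset of `Y` of size at most `n` lies in `F`, then so does the meet of `Y`. -/
def IsNFilter [Lattice α] (n : ℕ) (F : Set α) : Prop :=
  IsUpset F ∧ ∀ (Y : Finset α) (hY : Y.Nonempty),
    (∀ (X : Finset α) (hX : X.Nonempty), X ⊆ Y → X.card ≤ n → X.inf' hX id ∈ F) →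
    Y.inf' hY id ∈ F

/-- A prime upset: `x ⊔ y ∈ F` implies `x ∈ F` or `y ∈ F`. -/
def IsPrimeUpset [Lattice α] (F : Set α) : Prop :=
  ∀ x y : α, x ⊔ y ∈ F → x ∈ F ∨ y ∈ F

/-- A downward closed subset of a lattice. -/
def IsDownset [Lattice α] (I : Set α) : Prop :=
  ∀ ⦃x y : α⦄, x ∈ I → y ≤ x → y ∈ I

/-- A lattice ideal: a downset closed under binary joins. -/
def IsIdeal [Lattice α] (I : Set α) : Prop :=
  IsDownset I ∧ ∀ x y : α, x ∈ I → y ∈ I → x ⊔ y ∈ I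

/-- An `n`-ideal: the order dual notion of an `n`-filter. -/
def IsNIdeal [Lattice α] (n : ℕ) (I : Set α) : Prop :=
  IsDownset I ∧ ∀ (Y : Finset α) (hY : Y.Nonempty),
    (∀ (X : Finset α) (hX : X.Nonempty), X ⊆ Y → X.card ≤ n → X.sup' hX id ∈ I) →
    Y.sup' hY id ∈ I

variable {L : Type*} [DeMorgan L]

/-- Almost complete upset: `x ∈ F` implies `x ⊓ (y ⊔ ∼y) ∈ F`. -/
def AlmostComplete (F : Set L) : Prop := ∀ x ∈ F, ∀ y : L, x ⊓ (y ⊔ ∼y) ∈ F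

/-- Complete upset: almost complete and nonempty. -/
def IsCompleteUpset (F : Set L) : Prop := AlmostComplete F ∧ F.Nonempty

/-- Almost consistent upset: `(x ⊓ ∼x) ⊔ y ∈ F` implies `y ∈ F`. -/
def AlmostConsistent (F : Set L) : Prop := ∀ x y : L, (x ⊓ ∼x) ⊔ y ∈ F → y ∈ F

/-- Consistent upset: almost consistent and not total. -/
def IsConsistentUpset (F : Set L) : Prop := AlmostConsistent F ∧ F ≠ Set.univ

/-- Classical upset: complete and consistent. -/
def IsClassicalUpset (F : Set L) : Prop := IsCompleteUpset F ∧ IsConsistentUpset F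

/-- Kalman upset. -/
def IsKalmanUpset (F : Set L) : Prop :=
  ∀ x y z u : L, ((x ⊓ ∼x) ⊓ z) ⊔ u ∈ F → ((y ⊔ ∼y) ⊓ z) ⊔ u ∈ F

/-- A homomorphism of De Morgan lattices. -/
def IsDMHom {L M : Type*} [DeMorgan L] [DeMorgan M] (h : L → M) : Prop :=
  (∀ x y : L, h (x ⊓ y) = h x ⊓ h y) ∧ (∀ x y : L, h (x ⊔ y) = h x ⊔ h y) ∧
    ∀ x : L, h (∼x) = ∼(h x)

/-- The filter generated by all elements of the form `x ⊔ ∼x`. -/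
def Fcomp (L : Type*) [DeMorgan L] : Set L :=
  {a | ∃ (s : Finset L) (hs : s.Nonempty), s.inf' hs (fun x => x ⊔ ∼x) ≤ a}

/-- The `n`-filter generated by a set. -/
def nFilterGen (n : ℕ) (U : Set L) : Set L :=
  ⋂₀ {F : Set L | IsNFilter n F ∧ U ⊆ F}

/-- `Comp U`. -/
def CompCl (U : Set L) : Set L := {x | ∃ a ∈ U, ∃ f ∈ Fcomp L, a ⊓ f ≤ x}

/-- `Cons U`. -/
def ConsCl (U : Set L) : Set L := {x | ∃ f ∈ Fcomp L, ∼f ⊔ x ∈ U}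

/-- A congruence of De Morgan lattices, as a binary relation. -/
def IsCongruence (θ : L → L → Prop) : Prop :=
  Equivalence θ ∧
  (∀ a b c d : L, θ a b → θ c d → θ (a ⊓ c) (b ⊓ d)) ∧
  (∀ a b c d : L, θ a b → θ c d → θ (a ⊔ c) (b ⊔ d)) ∧
  ∀ a b : L, θ a b → θ (∼a) (∼b)

end Defs

/-- The four-element De Morgan lattice `DM₁` on `Bool × Bool`. -/
instance : DeMorgan (Bool × Bool) :=
  { (inferInstance : DistribLattice (Bool × Bool)) with
    dneg := fun p => (!p.2, !p.1)
    dneg_dneg := by decide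
    dneg_sup := by decide }

/-- Powers of `DM₁`, with componentwise operations. -/
instance {ι : Type*} : DeMorgan (ι → Bool × Bool) :=
  { (inferInstance : DistribLattice (ι → Bool × Bool)) with
    dneg := fun f i => ∼(f i)
    dneg_dneg := fun f => funext fun i => DeMorgan.dneg_dneg (f i)
    dneg_sup := fun f g => funext fun i => DeMorgan.dneg_sup (f i) (g i) }

/-!
`Comp U` is the least almost complete upset containing `U`: almost completeness lets one meet
an element with any finite meet of excluded-middle elements `x ⊔ ∼x`. Taking `fgₙ` keeps almost
completeness, because `z ↦ z ⊓ (y ⊔ ∼y)` preserves meets and preimages of `n`-filters under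
meet homomorphisms are again `n`-filters.
-/

lemma IsNFilter.preimage {α β : Type*} [Lattice α] [Lattice β] {n : ℕ} {F : Set β}
    (hF : IsNFilter n F) (g : InfHom α β) : IsNFilter n (g ⁻¹' F) := by
  classical
  refine ⟨fun _ _ hx hxy => hF.1 hx (OrderHomClass.mono g hxy), fun Y hY hsmall => ?_⟩
  rw [Set.mem_preimage, map_finset_inf' g hY id]
  change Y.inf' hY (id ∘ g) ∈ F
  rw [Finset.inf'_comp_eq_image hY id]
  refine hF.2 _ (hY.image g) fun X hX hXY hcard => ?_
  -- Lift `X ⊆ g '' Y` to some `W ⊆ Y` on which `g` is injective, so that `W` is as small as `X`.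
  have hsurj : Set.SurjOn g ↑Y ↑X := fun x hx => by simpa using hXY hx
  obtain ⟨W, hWY, hinj, rfl⟩ := Finset.exists_subset_injOn_image_eq_of_surjOn _ X hsurj
  have hW := hsmall W hX.of_image (Finset.coe_subset.1 hWY)
    (by rwa [Finset.card_image_of_injOn hinj] at hcard)
  rw [Set.mem_preimage, map_finset_inf' g hX.of_image id] at hW
  change W.inf' _ (id ∘ g) ∈ F at hW
  rwa [Finset.inf'_comp_eq_image hX.of_image id] at hW

section DeMorgan

variable {L : Type*} [DeMorgan L]

lemma isNFilter_nFilterGen (n : ℕ) (S : Set L) : IsNFilter n (nFilterGen n S) :=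
  ⟨fun _ _ hx hxy F hF => hF.1.1 (hx F hF) hxy,
    fun Y hY hsmall F hF => hF.1.2 Y hY fun X hX hXY hcard => hsmall X hX hXY hcard F hF⟩

lemma subset_nFilterGen (n : ℕ) (S : Set L) : S ⊆ nFilterGen n S :=
  fun _ hx _ hF => hF.2 hx

lemma nFilterGen_subset {n : ℕ} {S F : Set L} (hF : IsNFilter n F) (hSF : S ⊆ F) :
    nFilterGen n S ⊆ F :=
  fun _ hx => hx F ⟨hF, hSF⟩

lemma AlmostComplete.nFilterGen {n : ℕ} {S : Set L} (hS : AlmostComplete S) :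
    AlmostComplete (nFilterGen n S) := by
  intro x hx y
  -- `{z | z ⊓ (y ⊔ ∼y) ∈ fgₙ S}` is an `n`-filter containing `S`.
  let g : InfHom L L := ⟨(· ⊓ (y ⊔ ∼y)), fun a b => inf_inf_distrib_right a b _⟩
  exact nFilterGen_subset ((isNFilter_nFilterGen n S).preimage g)
    (fun z hz => subset_nFilterGen n S (hS z hz y)) hx

lemma sup_dneg_mem_fcomp (x : L) : x ⊔ ∼x ∈ Fcomp L :=
  ⟨{x}, Finset.singleton_nonempty x, by simp⟩

lemma inf_sup_dneg_mem_fcomp {f : L} (hf : f ∈ Fcomp L) (y : L) : f ⊓ (y ⊔ ∼y) ∈ Fcomp L := by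
  classical
  obtain ⟨s, hs, hsf⟩ := hf
  refine ⟨insert y s, Finset.insert_nonempty y s, ?_⟩
  rw [Finset.inf'_insert (H := hs), inf_comm]
  exact inf_le_inf_right _ hsf

lemma subset_compCl (U : Set L) : U ⊆ CompCl U :=
  fun a ha => ⟨a, ha, a ⊔ ∼a, sup_dneg_mem_fcomp a, inf_le_left⟩

lemma almostComplete_compCl (U : Set L) : AlmostComplete (CompCl U) := by
  rintro z ⟨a, ha, f, hf, hle⟩ y
  refine ⟨a, ha, f ⊓ (y ⊔ ∼y), inf_sup_dneg_mem_fcomp hf y, ?_⟩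
  rw [← inf_assoc]
  exact inf_le_inf_right _ hle

lemma AlmostComplete.inf_mem_of_mem_fcomp {G : Set L} (hup : IsUpset G) (hG : AlmostComplete G)
    {a f : L} (ha : a ∈ G) (hf : f ∈ Fcomp L) : a ⊓ f ∈ G := by
  obtain ⟨s, hs, hsf⟩ := hf
  refine hup ?_ (inf_le_inf_left a hsf)
  clear hsf
  induction hs using Finset.Nonempty.cons_induction with
  | singleton x => simpa using hG a ha x
  | cons x s hx hs ih =>
    rw [Finset.inf'_cons (H := hs), inf_left_comm, inf_comm]
    exact hG _ ih x

lemma compCl_subset {U G : Set L} (hup : IsUpset G) (hG : AlmostComplete G) (hUG : U ⊆ G) :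
    CompCl U ⊆ G := by
  rintro z ⟨a, ha, f, hf, hle⟩
  exact hup (hG.inf_mem_of_mem_fcomp hup (hUG ha) hf) hle

end DeMorgan

theorem statement15_general {L : Type*} [DeMorgan L] (n : ℕ)
    (U : Set L) (hne : U.Nonempty) :
    (IsNFilter n (nFilterGen n (CompCl U)) ∧ IsCompleteUpset (nFilterGen n (CompCl U))) ∧
    U ⊆ nFilterGen n (CompCl U) ∧
    ∀ G : Set L, IsNFilter n G → IsCompleteUpset G → U ⊆ G →
      nFilterGen n (CompCl U) ⊆ G := by
  have hUN : U ⊆ nFilterGen n (CompCl U) := (subset_compCl U).trans (subset_nFilterGen n _)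
  refine ⟨⟨isNFilter_nFilterGen n _, (almostComplete_compCl U).nFilterGen, hne.mono hUN⟩, hUN, ?_⟩
  intro G hG hGc hUG
  exact nFilterGen_subset hG (compCl_subset hG.1 hGc.1 hUG)

/-- `fgₙ (Comp U)` is the complete `n`-filter generated by `U`. -/
theorem statement15 {L : Type*} [DeMorgan L] [Nonempty L] (n : ℕ) (hn : 1 ≤ n)
    (U : Set L) (hU : IsUpset U) (hne : U.Nonempty) :
    (IsNFilter n (nFilterGen n (CompCl U)) ∧ IsCompleteUpset (nFilterGen n (CompCl U))) ∧
    U ⊆ nFilterGen n (CompCl U) ∧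
    ∀ G : Set L, IsNFilter n G → IsCompleteUpset G → U ⊆ G →
      nFilterGen n (CompCl U) ⊆ G :=
  statement15_general n U hne
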